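/- arXiv:1806.04673 — 4 statements merged into one kernel-verified Lean document; each statement's English description precedes it below -/
import Mathlib

section
/- For every integer n > 3, the word w_n = 1 n 2 1 3 2 4 3 5 4 ... (n-1)(n-2) n (n-1) over the alphabet {1, 2, ..., n} (that is, the word beginning with the two letters 1, n followed by the blocks (k+1) k for k = 1, 2, ..., n-1) is a 2-uniform word, and its alternating symbol graph G(w_n) equals the cycle graph C_n. In particular, every cycle graph C_n with n > 3 is 2-word-representable. -/
/-- The residWord word `w_{a,b}`: `w` with all letters other than `a`, `b` deleted. -/
def residWord (w : List ℕ) (a b : ℕ) : List ℕ :=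
  w.filter (fun c => c = a ∨ c = b)

/-- Letters `a` and `b` alternate in `w`: no two consecutive letters of `w_{a,b}` are equal. -/
def Alternates (w : List ℕ) (a b : ℕ) : Prop :=
  (residWord w a b).Chain' (· ≠ ·)

theorem residual_comm (w : List ℕ) (a b : ℕ) : residWord w a b = residWord w b a := by
  unfold residWord
  apply List.filter_congr
  intro x _
  exact decide_eq_decide.mpr or_comm

/-- The alternating symbol graph `G(w)`: distinct letters `a`, `b` are adjacent iff
both occur in `w` and alternate in `w`. -/
def altGraph (w : List ℕ) : SimpleGraph ℕ where
  Adj a b := a ≠ b ∧ a ∈ w ∧ b ∈ w ∧ Alternates w a b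
  symm := by
    constructor
    rintro a b ⟨h1, h2, h3, h4⟩
    refine ⟨h1.symm, h3, h2, ?_⟩
    unfold Alternates
    rw [residual_comm]
    exact h4
  loopless := by
    constructor
    rintro a ⟨h1, -⟩
    exact h1 rfl

/-- The cycle graph `Cₙ` on vertices `{1, …, n}` (as a graph on `ℕ`):
`k` is adjacent to `k+1` for `1 ≤ k ≤ n-1`, and `n` is adjacent to `1`. -/
def cycleGraph (n : ℕ) : SimpleGraph ℕ where
  Adj a b := a ≠ b ∧ 1 ≤ a ∧ a ≤ n ∧ 1 ≤ b ∧ b ≤ n ∧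
    (b = a + 1 ∨ a = b + 1 ∨ (a = 1 ∧ b = n) ∨ (b = 1 ∧ a = n))
  symm := by
    constructor
    rintro a b ⟨h1, h2, h3, h4, h5, h6⟩
    exact ⟨h1.symm, h4, h5, h2, h3, by tauto⟩
  loopless := by
    constructor
    rintro a ⟨h1, -⟩
    exact h1 rfl

/-- A word is `k`-uniform if every letter occurring in it occurs exactly `k` times. -/
def IsUniform (w : List ℕ) (k : ℕ) : Prop := ∀ a ∈ w, w.count a = k

/-- The word `wₙ = 1 n 2 1 3 2 4 3 5 4 … (n-1)(n-2) n (n-1)`. -/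
def wn (n : ℕ) : List ℕ :=
  [1, n] ++ (List.range (n - 1)).flatMap (fun k => [k + 2, k + 1])




def Gf (a b m : ℕ) : List ℕ :=
  (List.range m).flatMap (fun k => [k + 2, k + 1].filter (fun c => decide (c = a ∨ c = b)))

lemma wn_resid (n a b : ℕ) :
    residWord (wn n) a b =
      ([1, n].filter (fun c => decide (c = a ∨ c = b))) ++ Gf a b (n - 1) := by
  simp only [residWord, wn, List.filter_append, List.filter_flatMap, Gf]

lemma Gf_succ (a b m : ℕ) :
    Gf a b (m + 1) = Gf a b m ++ [m + 2, m + 1].filter (fun c => decide (c = a ∨ c = b)) := by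
  simp [Gf, List.range_succ]

lemma filter2 (a b x y : ℕ) :
    [x, y].filter (fun c => decide (c = a ∨ c = b)) =
      (if x = a ∨ x = b then [x] else []) ++ (if y = a ∨ y = b then [y] else []) := by
  by_cases hx : x = a ∨ x = b <;> by_cases hy : y = a ∨ y = b <;>
    simp [List.filter_cons, hx, hy]

lemma Gf_stable (a b : ℕ) {i j : ℕ} (h : i ≤ j)
    (he : ∀ k, i ≤ k → k < j → ¬(k + 2 = a ∨ k + 2 = b) ∧ ¬(k + 1 = a ∨ k + 1 = b)) :
    Gf a b j = Gf a b i := by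
  induction j, h using Nat.le_induction with
  | base => rfl
  | succ j hij ih =>
    rw [Gf_succ, filter2, if_neg, if_neg]
    · rw [List.append_nil, List.append_nil]
      exact ih fun k hk1 hk2 => he k hk1 (by omega)
    · exact (he j hij (by omega)).2
    · exact (he j hij (by omega)).1

lemma Gf_const (a b i j : ℕ) (l : List ℕ) (hij : i ≤ j)
    (he : ∀ k, i ≤ k → k < j → ¬(k + 2 = a ∨ k + 2 = b) ∧ ¬(k + 1 = a ∨ k + 1 = b))
    (hi : Gf a b i = l) : Gf a b j = l :=
  (Gf_stable a b hij he).trans hi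

lemma Gf_succ_both (a b m : ℕ) (l : List ℕ) (h : Gf a b m = l)
    (h2 : m + 2 = a ∨ m + 2 = b) (h1 : m + 1 = a ∨ m + 1 = b) :
    Gf a b (m + 1) = l ++ [m + 2, m + 1] := by
  rw [Gf_succ, h, filter2, if_pos h2, if_pos h1]; rfl

lemma Gf_succ_hi (a b m : ℕ) (l : List ℕ) (h : Gf a b m = l)
    (h2 : m + 2 = a ∨ m + 2 = b) (h1 : ¬(m + 1 = a ∨ m + 1 = b)) :
    Gf a b (m + 1) = l ++ [m + 2] := by
  rw [Gf_succ, h, filter2, if_pos h2, if_neg h1, List.append_nil]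

lemma Gf_succ_lo (a b m : ℕ) (l : List ℕ) (h : Gf a b m = l)
    (h2 : ¬(m + 2 = a ∨ m + 2 = b)) (h1 : m + 1 = a ∨ m + 1 = b) :
    Gf a b (m + 1) = l ++ [m + 1] := by
  rw [Gf_succ, h, filter2, if_neg h2, if_pos h1, List.nil_append]

lemma alt_iff (n a b : ℕ) (hn : 3 < n) (ha : 1 ≤ a) (hab : a < b) (hb : b ≤ n) :
    Alternates (wn n) a b ↔ (b = a + 1 ∨ (a = 1 ∧ b = n)) := by
  by_cases hsucc : b = a + 1
  · subst hsucc
    by_cases ha1 : a = 1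
    · -- case 2 : a = 1, b = 2
      subst ha1
      obtain ⟨e, rfl⟩ : ∃ e, n = e + 4 := ⟨n - 4, by omega⟩
      have g1 : Gf 1 2 1 = [2, 1] := Gf_succ_both 1 2 0 [] rfl (by omega) (by omega)
      have g2 : Gf 1 2 2 = [2, 1, 2] := Gf_succ_lo 1 2 1 [2, 1] g1 (by omega) (by omega)
      have g3 : Gf 1 2 (e + 3) = [2, 1, 2] :=
        Gf_const 1 2 2 (e + 3) _ (by omega) (by intro k h1 h2; constructor <;> omega) g2
      have hr : residWord (wn (e + 4)) 1 2 = [1, 2, 1, 2] := by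
        rw [wn_resid, show e + 4 - 1 = e + 3 by omega, g3, filter2,
          if_pos (by omega : (1:ℕ) = 1 ∨ (1:ℕ) = 2), if_neg (by omega : ¬(e + 4 = 1 ∨ e + 4 = 2))]
        rfl
      unfold Alternates
      rw [hr]
      simp [List.Chain', List.isChain_cons_cons] <;> omega
    · by_cases hbn : a + 1 = n
      · -- case 3 : b = n = a + 1, a ≥ 2
        obtain ⟨c, rfl⟩ : ∃ c, a = c + 2 := ⟨a - 2, by omega⟩
        obtain rfl : n = c + 3 := by omega
        have g0 : Gf (c + 2) (c + 3) c = [] :=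
          Gf_const _ _ 0 c _ (by omega) (by intro k h1 h2; constructor <;> omega) rfl
        have g1 : Gf (c + 2) (c + 3) (c + 1) = [c + 2] :=
          Gf_succ_hi _ _ c [] g0 (by omega) (by omega)
        have g2 : Gf (c + 2) (c + 3) (c + 2) = [c + 2, c + 3, c + 2] :=
          Gf_succ_both _ _ (c + 1) _ g1 (by omega) (by omega)
        have hr : residWord (wn (c + 3)) (c + 2) (c + 3) = [c + 3, c + 2, c + 3, c + 2] := by
          rw [wn_resid, show c + 3 - 1 = c + 2 by omega, g2, filter2,
            if_neg (by omega : ¬((1:ℕ) = c + 2 ∨ (1:ℕ) = c + 3)),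
            if_pos (by omega : c + 3 = c + 2 ∨ c + 3 = c + 3)]
          rfl
        unfold Alternates
        rw [hr]
        simp [List.Chain', List.isChain_cons_cons] <;> omega
      · -- case 1 : interior edge, 2 ≤ a, a + 1 ≤ n - 1
        obtain ⟨c, rfl⟩ : ∃ c, a = c + 2 := ⟨a - 2, by omega⟩
        obtain ⟨e, rfl⟩ : ∃ e, n = c + 4 + e := ⟨n - (c + 4), by omega⟩
        have g0 : Gf (c + 2) (c + 3) c = [] :=
          Gf_const _ _ 0 c _ (by omega) (by intro k h1 h2; constructor <;> omega) rfl
        have g1 : Gf (c + 2) (c + 3) (c + 1) = [c + 2] :=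
          Gf_succ_hi _ _ c [] g0 (by omega) (by omega)
        have g2 : Gf (c + 2) (c + 3) (c + 2) = [c + 2, c + 3, c + 2] :=
          Gf_succ_both _ _ (c + 1) _ g1 (by omega) (by omega)
        have g3 : Gf (c + 2) (c + 3) (c + 3) = [c + 2, c + 3, c + 2, c + 3] :=
          Gf_succ_lo _ _ (c + 2) _ g2 (by omega) (by omega)
        have g4 : Gf (c + 2) (c + 3) (c + 3 + e) = [c + 2, c + 3, c + 2, c + 3] :=
          Gf_const _ _ (c + 3) _ _ (by omega) (by intro k h1 h2; constructor <;> omega) g3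
        have hr : residWord (wn (c + 4 + e)) (c + 2) (c + 3) = [c + 2, c + 3, c + 2, c + 3] := by
          rw [wn_resid, show c + 4 + e - 1 = c + 3 + e by omega, g4, filter2,
            if_neg (by omega : ¬((1:ℕ) = c + 2 ∨ (1:ℕ) = c + 3)),
            if_neg (by omega : ¬(c + 4 + e = c + 2 ∨ c + 4 + e = c + 3))]
          rfl
        unfold Alternates
        rw [hr]
        simp [List.Chain', List.isChain_cons_cons] <;> omega
  · by_cases h14 : a = 1 ∧ b = n
    · -- case 4 : a = 1, b = n
      obtain ⟨rfl, hbn⟩ := h14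
      obtain ⟨e, rfl⟩ : ∃ e, n = e + 4 := ⟨n - 4, by omega⟩
      obtain rfl : b = e + 4 := hbn
      have g1 : Gf 1 (e + 4) 1 = [1] := Gf_succ_lo 1 (e + 4) 0 [] rfl (by omega) (by omega)
      have g2 : Gf 1 (e + 4) (e + 2) = [1] :=
        Gf_const _ _ 1 (e + 2) _ (by omega) (by intro k h1 h2; constructor <;> omega) g1
      have g3 : Gf 1 (e + 4) (e + 3) = [1, e + 4] :=
        Gf_succ_hi _ _ (e + 2) _ g2 (by omega) (by omega)
      have hr : residWord (wn (e + 4)) 1 (e + 4) = [1, e + 4, 1, e + 4] := by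
        rw [wn_resid, show e + 4 - 1 = e + 3 by omega, g3, filter2,
          if_pos (by omega : (1:ℕ) = 1 ∨ (1:ℕ) = e + 4),
          if_pos (by omega : e + 4 = 1 ∨ e + 4 = e + 4)]
        rfl
      unfold Alternates
      rw [hr]
      simp [List.Chain', List.isChain_cons_cons] <;> omega
    · by_cases ha1 : a = 1
      · -- case 6 : a = 1, 3 ≤ b < n
        subst ha1
        obtain ⟨d, rfl⟩ : ∃ d, b = d + 3 := ⟨b - 3, by omega⟩
        obtain ⟨f, rfl⟩ : ∃ f, n = d + 4 + f := ⟨n - (d + 4), by omega⟩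
        have g1 : Gf 1 (d + 3) 1 = [1] := Gf_succ_lo 1 (d + 3) 0 [] rfl (by omega) (by omega)
        have g2 : Gf 1 (d + 3) (d + 1) = [1] :=
          Gf_const _ _ 1 (d + 1) _ (by omega) (by intro k h1 h2; constructor <;> omega) g1
        have g3 : Gf 1 (d + 3) (d + 2) = [1, d + 3] :=
          Gf_succ_hi _ _ (d + 1) _ g2 (by omega) (by omega)
        have g4 : Gf 1 (d + 3) (d + 3) = [1, d + 3, d + 3] :=
          Gf_succ_lo _ _ (d + 2) _ g3 (by omega) (by omega)
        have g5 : Gf 1 (d + 3) (d + 3 + f) = [1, d + 3, d + 3] :=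
          Gf_const _ _ (d + 3) _ _ (by omega) (by intro k h1 h2; constructor <;> omega) g4
        have hr : residWord (wn (d + 4 + f)) 1 (d + 3) = [1, 1, d + 3, d + 3] := by
          rw [wn_resid, show d + 4 + f - 1 = d + 3 + f by omega, g5, filter2,
            if_pos (by omega : (1:ℕ) = 1 ∨ (1:ℕ) = d + 3),
            if_neg (by omega : ¬(d + 4 + f = 1 ∨ d + 4 + f = d + 3))]
          rfl
        unfold Alternates
        rw [hr]
        simp [List.Chain', List.isChain_cons_cons] <;> omega
      · by_cases hbn : b = n
        · -- case 7 : 2 ≤ a ≤ n - 2, b = n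
          obtain ⟨c, rfl⟩ : ∃ c, a = c + 2 := ⟨a - 2, by omega⟩
          obtain ⟨f, rfl⟩ : ∃ f, n = c + 4 + f := ⟨n - (c + 4), by omega⟩
          obtain rfl : b = c + 4 + f := hbn
          have g0 : Gf (c + 2) (c + 4 + f) c = [] :=
            Gf_const _ _ 0 c _ (by omega) (by intro k h1 h2; constructor <;> omega) rfl
          have g1 : Gf (c + 2) (c + 4 + f) (c + 1) = [c + 2] :=
            Gf_succ_hi _ _ c [] g0 (by omega) (by omega)
          have g2 : Gf (c + 2) (c + 4 + f) (c + 2) = [c + 2, c + 2] :=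
            Gf_succ_lo _ _ (c + 1) _ g1 (by omega) (by omega)
          have g3 : Gf (c + 2) (c + 4 + f) (c + 2 + f) = [c + 2, c + 2] :=
            Gf_const _ _ (c + 2) _ _ (by omega) (by intro k h1 h2; constructor <;> omega) g2
          have g4 : Gf (c + 2) (c + 4 + f) (c + 2 + f + 1) = [c + 2, c + 2, c + 2 + f + 2] :=
            Gf_succ_hi _ _ (c + 2 + f) _ g3 (by omega) (by omega)
          have hr : residWord (wn (c + 4 + f)) (c + 2) (c + 4 + f) =
              [c + 4 + f, c + 2, c + 2, c + 2 + f + 2] := by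
            rw [wn_resid, show c + 4 + f - 1 = c + 2 + f + 1 by omega, g4, filter2,
              if_neg (by omega : ¬((1:ℕ) = c + 2 ∨ (1:ℕ) = c + 4 + f)),
              if_pos (by omega : c + 4 + f = c + 2 ∨ c + 4 + f = c + 4 + f)]
            rfl
          unfold Alternates
          rw [hr]
          simp [List.Chain', List.isChain_cons_cons] <;> omega
        · -- case 5 : 2 ≤ a, a + 2 ≤ b ≤ n - 1
          obtain ⟨c, rfl⟩ : ∃ c, a = c + 2 := ⟨a - 2, by omega⟩
          obtain ⟨d, rfl⟩ : ∃ d, b = c + 4 + d := ⟨b - (c + 4), by omega⟩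
          obtain ⟨f, rfl⟩ : ∃ f, n = c + 5 + d + f := ⟨n - (c + 5 + d), by omega⟩
          have g0 : Gf (c + 2) (c + 4 + d) c = [] :=
            Gf_const _ _ 0 c _ (by omega) (by intro k h1 h2; constructor <;> omega) rfl
          have g1 : Gf (c + 2) (c + 4 + d) (c + 1) = [c + 2] :=
            Gf_succ_hi _ _ c [] g0 (by omega) (by omega)
          have g2 : Gf (c + 2) (c + 4 + d) (c + 2) = [c + 2, c + 2] :=
            Gf_succ_lo _ _ (c + 1) _ g1 (by omega) (by omega)
          have g3 : Gf (c + 2) (c + 4 + d) (c + 2 + d) = [c + 2, c + 2] :=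
            Gf_const _ _ (c + 2) _ _ (by omega) (by intro k h1 h2; constructor <;> omega) g2
          have g4 : Gf (c + 2) (c + 4 + d) (c + 2 + d + 1) = [c + 2, c + 2, c + 2 + d + 2] :=
            Gf_succ_hi _ _ (c + 2 + d) _ g3 (by omega) (by omega)
          have g5 : Gf (c + 2) (c + 4 + d) (c + 2 + d + 1 + 1) =
              [c + 2, c + 2, c + 2 + d + 2, c + 2 + d + 1 + 1] :=
            Gf_succ_lo _ _ (c + 2 + d + 1) _ g4 (by omega) (by omega)
          have g6 : Gf (c + 2) (c + 4 + d) (c + 4 + d + f) =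
              [c + 2, c + 2, c + 2 + d + 2, c + 2 + d + 1 + 1] :=
            Gf_const _ _ (c + 2 + d + 1 + 1) _ _ (by omega)
              (by intro k h1 h2; constructor <;> omega) g5
          have hr : residWord (wn (c + 5 + d + f)) (c + 2) (c + 4 + d) =
              [c + 2, c + 2, c + 2 + d + 2, c + 2 + d + 1 + 1] := by
            rw [wn_resid, show c + 5 + d + f - 1 = c + 4 + d + f by omega, g6, filter2,
              if_neg (by omega : ¬((1:ℕ) = c + 2 ∨ (1:ℕ) = c + 4 + d)),
              if_neg (by omega : ¬(c + 5 + d + f = c + 2 ∨ c + 5 + d + f = c + 4 + d))]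
            rfl
          unfold Alternates
          rw [hr]
          simp [List.Chain', List.isChain_cons_cons] <;> omega

lemma count_flat (x m : ℕ) :
    ((List.range m).flatMap (fun k => [k + 2, k + 1])).count x =
      (if 2 ≤ x ∧ x ≤ m + 1 then 1 else 0) + (if 1 ≤ x ∧ x ≤ m then 1 else 0) := by
  induction m with
  | zero => simp only [List.range_zero, List.flatMap_nil, List.count_nil]; split_ifs <;> omega
  | succ m ih =>
    rw [List.range_succ, List.flatMap_append, List.count_append, ih]
    simp only [List.flatMap_cons, List.flatMap_nil, List.append_nil, List.count_cons,
      List.count_nil, beq_iff_eq]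
    split_ifs <;> omega

lemma wn_count (n x : ℕ) (hn : 3 < n) (h1 : 1 ≤ x) (h2 : x ≤ n) : (wn n).count x = 2 := by
  rw [wn, List.count_append, count_flat, show n - 1 + 1 = n by omega]
  simp only [List.count_cons, List.count_nil, beq_iff_eq]
  split_ifs <;> omega

lemma alt_comm (w : List ℕ) (a b : ℕ) : Alternates w a b ↔ Alternates w b a := by
  unfold Alternates
  rw [residual_comm]

theorem wn_two_uniform_and_represents_cycle' (n : ℕ) (hn : 3 < n) :
    (∀ a ∈ wn n, 1 ≤ a ∧ a ≤ n) ∧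
    (∀ a, 1 ≤ a → a ≤ n → (wn n).count a = 2) ∧
    altGraph (wn n) = cycleGraph n := by
  have hmemb : ∀ a ∈ wn n, 1 ≤ a ∧ a ≤ n := by
    intro x hx
    simp only [wn, List.mem_append, List.mem_cons, List.not_mem_nil, or_false,
      List.mem_flatMap, List.mem_range] at hx
    rcases hx with (rfl | rfl) | ⟨k, hk, rfl | rfl | h⟩ <;> first | omega | simp at h
  have hmem : ∀ x, 1 ≤ x → x ≤ n → x ∈ wn n := by
    intro x h1 h2
    have := wn_count n x hn h1 h2
    have : 0 < (wn n).count x := by omega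
    exact List.count_pos_iff.mp this
  refine ⟨hmemb, fun a h1 h2 => wn_count n a hn h1 h2, ?_⟩
  apply SimpleGraph.ext
  ext a b
  show (a ≠ b ∧ a ∈ wn n ∧ b ∈ wn n ∧ Alternates (wn n) a b) ↔
    (a ≠ b ∧ 1 ≤ a ∧ a ≤ n ∧ 1 ≤ b ∧ b ≤ n ∧
      (b = a + 1 ∨ a = b + 1 ∨ (a = 1 ∧ b = n) ∨ (b = 1 ∧ a = n)))
  constructor
  · rintro ⟨hab, hma, hmb, halt⟩
    obtain ⟨ha1, han⟩ := hmemb a hma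
    obtain ⟨hb1, hbn⟩ := hmemb b hmb
    refine ⟨hab, ha1, han, hb1, hbn, ?_⟩
    rcases Nat.lt_or_ge a b with h | h
    · rcases (alt_iff n a b hn ha1 h hbn).mp halt with h' | ⟨h1, h2⟩
      · exact Or.inl h'
      · exact Or.inr (Or.inr (Or.inl ⟨h1, h2⟩))
    · have hba : b < a := by omega
      rcases (alt_iff n b a hn hb1 hba han).mp ((alt_comm _ a b).mp halt) with h' | ⟨h1, h2⟩
      · exact Or.inr (Or.inl h')
      · exact Or.inr (Or.inr (Or.inr ⟨h1, h2⟩))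
  · rintro ⟨hab, ha1, han, hb1, hbn, hor⟩
    refine ⟨hab, hmem a ha1 han, hmem b hb1 hbn, ?_⟩
    rcases hor with h | h | ⟨h1, h2⟩ | ⟨h1, h2⟩
    · exact (alt_iff n a b hn ha1 (by omega) hbn).mpr (Or.inl h)
    · exact (alt_comm _ b a).mp ((alt_iff n b a hn hb1 (by omega) han).mpr (Or.inl h))
    · exact (alt_iff n a b hn ha1 (by omega) hbn).mpr (Or.inr ⟨h1, h2⟩)
    · exact (alt_comm _ b a).mp ((alt_iff n b a hn hb1 (by omega) han).mpr (Or.inr ⟨h1, h2⟩))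

/-- For every `n > 3`, the word `wₙ` is a 2-uniform word over the
alphabet `{1, …, n}` and its alternating symbol graph equals the cycle graph `Cₙ`. -/
theorem wn_two_uniform_and_represents_cycle (n : ℕ) (hn : 3 < n) :
    (∀ a ∈ wn n, 1 ≤ a ∧ a ≤ n) ∧
    (∀ a, 1 ≤ a → a ≤ n → (wn n).count a = 2) ∧
    altGraph (wn n) = cycleGraph n := by
  exact wn_two_uniform_and_represents_cycle' n hn
end

section
/- For every integer n > 3, the 2n cyclic rotations of the word w_n = 1 n 2 1 3 2 4 3 5 4 ... (n-1)(n-2) n (n-1) (the rotations by 0, 1, ..., 2n-1 positions) are pairwise distinct words. -/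
def wnAux (m : ℕ) : List ℕ := (List.range m).flatMap (fun k => [k + 2, k + 1])

lemma wnAux_length (m : ℕ) : (wnAux m).length = 2 * m := by
  induction m with
  | zero => rfl
  | succ m ih =>
    unfold wnAux at *
    rw [List.range_succ, List.flatMap_append, List.length_append, ih]
    simp; omega

lemma wnAux_get (m j : ℕ) (hj : j < 2 * m) :
    (wnAux m)[j]? = some (if j % 2 = 0 then j / 2 + 2 else j / 2 + 1) := by
  induction m with
  | zero => omega
  | succ m ih =>
    unfold wnAux at *
    rw [List.range_succ, List.flatMap_append]
    rcases lt_or_ge j (2 * m) with h | h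
    · rw [List.getElem?_append_left (by rw [show ((List.range m).flatMap fun k => [k+2,k+1]) = wnAux m from rfl, wnAux_length]; exact h)]
      exact ih h
    · rw [List.getElem?_append_right (by rw [show ((List.range m).flatMap fun k => [k+2,k+1]) = wnAux m from rfl, wnAux_length]; exact h)]
      rw [show ((List.range m).flatMap fun k => [k+2,k+1]) = wnAux m from rfl, wnAux_length]
      rcases (by omega : j = 2*m ∨ j = 2*m + 1) with rfl | rfl <;>
        simp [Nat.mul_add_mod] <;> omega

lemma wn_eq (n : ℕ) : wn n = 1 :: n :: wnAux (n - 1) := rfl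

lemma wn_length (n : ℕ) (hn : 1 ≤ n) : (wn n).length = 2 * n := by
  rw [wn_eq]
  simp [wnAux_length]
  omega

lemma wn_get_zero (n : ℕ) : (wn n)[0]? = some 1 := rfl

lemma wn_get_three (n : ℕ) (hn : 3 < n) : (wn n)[3]? = some 1 := by
  rw [wn_eq]
  simp only [List.getElem?_cons_succ]
  rw [wnAux_get (n-1) 1 (by omega)]
  norm_num

lemma wn_get_one (n s : ℕ) (hn : 3 < n) (hs : s < 2 * n)
    (h : (wn n)[s]? = some 1) : s = 0 ∨ s = 3 := by
  rw [wn_eq] at h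
  match s with
  | 0 => left; rfl
  | 1 => simp at h; omega
  | (t + 2) =>
    simp only [List.getElem?_cons_succ] at h
    rw [wnAux_get (n-1) t (by omega)] at h
    rw [Option.some_inj] at h
    split at h <;> omega

lemma wn_key (n : ℕ) (hn : 3 < n) (i j : ℕ) (hi : i < 2 * n) (hj : j < 2 * n)
    (hij : i < j) (heq : (wn n).rotate i = (wn n).rotate j) : False := by
  have hlen : (wn n).length = 2 * n := wn_length n (by omega)
  set d := j - i with hd
  have claim : ∀ s, s < 2 * n → (wn n)[s]? = (wn n)[(s + d) % (2 * n)]? := by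
    intro s hs
    set t := (s + 2 * n - i) % (2 * n) with hts
    have ht : t < 2 * n := Nat.mod_lt _ (by omega)
    have h1 : ((wn n).rotate i)[t]? = ((wn n).rotate j)[t]? := by rw [heq]
    rw [List.getElem?_rotate (by omega), List.getElem?_rotate (by omega)] at h1
    rw [hlen] at h1
    have e1 : (t + i) % (2 * n) = s := by
      rw [hts, Nat.mod_add_mod, show s + 2 * n - i + i = s + 2 * n by omega,
        Nat.add_mod_right, Nat.mod_eq_of_lt hs]
    have e2 : (t + j) % (2 * n) = (s + d) % (2 * n) := by
      rw [hts, Nat.mod_add_mod, show s + 2 * n - i + j = s + d + 2 * n by omega,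
        Nat.add_mod_right]
    rw [e1, e2] at h1
    exact h1
  have h0 := claim 0 (by omega)
  rw [wn_get_zero, Nat.zero_add, Nat.mod_eq_of_lt (by omega : d < 2 * n)] at h0
  have hd3 : d = 3 := by
    rcases wn_get_one n d hn (by omega) h0.symm with h | h <;> omega
  have h3 := claim 3 (by omega)
  rw [wn_get_three n hn, hd3, Nat.mod_eq_of_lt (by omega : 3 + 3 < 2 * n)] at h3
  rcases wn_get_one n 6 hn (by omega) h3.symm with h | h <;> omega


/-- For every `n > 3`, the `2n` cyclic rotations of `wₙ`
(by `0, 1, …, 2n - 1` positions) are pairwise distinct words. -/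
theorem wn_rotations_distinct (n : ℕ) (hn : 3 < n) :
    ∀ i j, i < 2 * n → j < 2 * n → (wn n).rotate i = (wn n).rotate j → i = j := by
  intro i j hi hj h
  rcases lt_trichotomy i j with hij | hij | hij
  · exact absurd h (fun h => wn_key n hn i j hi hj hij h)
  · exact hij
  · exact absurd h (fun h => wn_key n hn j i hj hi hij h.symm)
end

section
/- For every integer n > 3, the 4n words consisting of the 2n cyclic rotations of w_n together with the 2n cyclic rotations of the reversal of w_n are pairwise distinct; equivalently, the set of words obtained from w_n by composing a cyclic rotation with an optional reflection has exactly 4n elements. -/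
def pf (j : ℕ) : ℕ := if j % 2 = 0 then j / 2 + 2 else j / 2 + 1

lemma flat_eq (m : ℕ) :
    (List.range m).flatMap (fun k => [k + 2, k + 1]) = (List.range (2 * m)).map pf := by
  induction m with
  | zero => simp
  | succ m ih =>
    rw [List.range_succ, List.flatMap_append, ih]
    have h2 : 2 * (m + 1) = (2 * m + 1) + 1 := by ring
    rw [h2, List.range_succ, List.range_succ, List.map_append, List.map_append,
      List.append_assoc]
    congr 1
    have e1 : pf (2 * m) = m + 2 := by simp [pf]
    have e2 : pf (2 * m + 1) = m + 1 := by unfold pf; split <;> omega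
    simp [e1, e2]

def gfun (n i : ℕ) : ℕ := if i = 0 then 1 else if i = 1 then n else pf (i - 2)

lemma wn_getElem? (n : ℕ) (hn : 1 ≤ n) (i : ℕ) (h : i < 2 * n) :
    (wn n)[i]? = some (gfun n i) := by
  unfold wn gfun
  rw [flat_eq]
  match i, h with
  | 0, h => simp
  | 1, h => simp
  | (j+2), h =>
    have hj : j < 2 * (n - 1) := by omega
    simp only [List.cons_append, List.nil_append, List.getElem?_cons_succ,
      List.getElem?_map, List.getElem?_range hj, Option.map_some]
    simp
lemma loc1 {n i : ℕ} (hn : 3 < n) (h : i < 2 * n) (hg : gfun n i = 1) : i = 0 ∨ i = 3 := by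
  unfold gfun pf at hg
  split_ifs at hg <;> omega

lemma locn {n i : ℕ} (hn : 3 < n) (h : i < 2 * n) (hg : gfun n i = n) : i = 1 ∨ i = 2 * n - 2 := by
  unfold gfun pf at hg
  split_ifs at hg <;> omega

lemma gfun0 (n : ℕ) : gfun n 0 = 1 := rfl
lemma gfun1 (n : ℕ) : gfun n 1 = n := rfl

lemma mod2 {a m M : ℕ} (hm : a + m < 2 * M) (hM : 0 < M) :
    (a + m) % M = a + m ∨ (a + m) % M + M = a + m := by
  rcases Nat.lt_or_ge (a + m) M with h | h
  · left; exact Nat.mod_eq_of_lt h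
  · right
    have : (a + m) % M = (a + m) - M := by
      rw [Nat.mod_eq_sub_mod h, Nat.mod_eq_of_lt (by omega)]
    omega

lemma rev_getElem? (n : ℕ) (hn : 1 ≤ n) (i : ℕ) (h : i < 2 * n) :
    (wn n).reverse[i]? = some (gfun n (2 * n - 1 - i)) := by
  rw [List.getElem?_reverse (by rw [wn_length n hn]; exact h), wn_length n hn,
    wn_getElem? n hn _ (by omega)]

lemma rev_length (n : ℕ) (hn : 1 ≤ n) : (wn n).reverse.length = 2 * n := by
  rw [List.length_reverse, wn_length n hn]

/-- a nontrivial short rotation of wn is not wn -/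
lemma rot_wn_eq {n m : ℕ} (hn : 3 < n) (hm : m < 2 * n) (h : (wn n).rotate m = wn n) :
    m = 0 := by
  have hn1 : 1 ≤ n := by omega
  have hL := wn_length n hn1
  have h0 : ((wn n).rotate m)[0]? = (wn n)[0]? := by rw [h]
  have h1 : ((wn n).rotate m)[1]? = (wn n)[1]? := by rw [h]
  rw [List.getElem?_rotate (by omega), hL] at h0 h1
  have hp : (0 + m) % (2 * n) < 2 * n := Nat.mod_lt _ (by omega)
  have hq : (1 + m) % (2 * n) < 2 * n := Nat.mod_lt _ (by omega)
  rw [wn_getElem? n hn1 _ hp, wn_getElem? n hn1 0 (by omega)] at h0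
  rw [wn_getElem? n hn1 _ hq, wn_getElem? n hn1 1 (by omega)] at h1
  simp only [Option.some_inj, gfun0, gfun1] at h0 h1
  have l0 := loc1 hn hp h0
  have l1 := locn hn hq h1
  have d0 := mod2 (a := 0) (m := m) (M := 2 * n) (by omega) (by omega)
  have d1 := mod2 (a := 1) (m := m) (M := 2 * n) (by omega) (by omega)
  omega

/-- a nontrivial short rotation of the reversal is not the reversal -/
lemma rot_rev_eq {n m : ℕ} (hn : 3 < n) (hm : m < 2 * n)
    (h : (wn n).reverse.rotate m = (wn n).reverse) : m = 0 := by
  have hn1 : 1 ≤ n := by omega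
  have hL := rev_length n hn1
  have h0 : ((wn n).reverse.rotate m)[2 * n - 2]? = (wn n).reverse[2 * n - 2]? := by rw [h]
  have h1 : ((wn n).reverse.rotate m)[2 * n - 1]? = (wn n).reverse[2 * n - 1]? := by rw [h]
  rw [List.getElem?_rotate (by omega), hL] at h0 h1
  have hp : (2 * n - 2 + m) % (2 * n) < 2 * n := Nat.mod_lt _ (by omega)
  have hq : (2 * n - 1 + m) % (2 * n) < 2 * n := Nat.mod_lt _ (by omega)
  rw [rev_getElem? n hn1 _ hp, rev_getElem? n hn1 _ (by omega)] at h0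
  rw [rev_getElem? n hn1 _ hq, rev_getElem? n hn1 _ (by omega)] at h1
  have e0 : 2 * n - 1 - (2 * n - 2) = 1 := by omega
  have e1 : 2 * n - 1 - (2 * n - 1) = 0 := by omega
  rw [e0] at h0
  rw [e1] at h1
  simp only [Option.some_inj, gfun0, gfun1] at h0 h1
  have l0 := locn hn (by omega) h0
  have l1 := loc1 hn (by omega) h1
  have d0 := mod2 (a := 2 * n - 2) (m := m) (M := 2 * n) (by omega) (by omega)
  have d1 := mod2 (a := 2 * n - 1) (m := m) (M := 2 * n) (by omega) (by omega)
  omega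

/-- no rotation of the reversal equals wn -/
lemma cross {n m : ℕ} (hn : 3 < n) (hm : m < 2 * n) :
    (wn n).reverse.rotate m ≠ wn n := by
  intro h
  have hn1 : 1 ≤ n := by omega
  have hL := rev_length n hn1
  have h0 : ((wn n).reverse.rotate m)[0]? = (wn n)[0]? := by rw [h]
  have h1 : ((wn n).reverse.rotate m)[1]? = (wn n)[1]? := by rw [h]
  rw [List.getElem?_rotate (by omega), hL] at h0 h1
  have hp : (0 + m) % (2 * n) < 2 * n := Nat.mod_lt _ (by omega)
  have hq : (1 + m) % (2 * n) < 2 * n := Nat.mod_lt _ (by omega)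
  rw [rev_getElem? n hn1 _ hp, wn_getElem? n hn1 0 (by omega)] at h0
  rw [rev_getElem? n hn1 _ hq, wn_getElem? n hn1 1 (by omega)] at h1
  simp only [Option.some_inj, gfun0, gfun1] at h0 h1
  have l0 := loc1 hn (by omega) h0
  have l1 := locn hn (by omega) h1
  have d0 := mod2 (a := 0) (m := m) (M := 2 * n) (by omega) (by omega)
  have d1 := mod2 (a := 1) (m := m) (M := 2 * n) (by omega) (by omega)
  omega

lemma rot_inj_aux {n : ℕ} {l : List ℕ} (hn : 3 < n)
    (hself : ∀ m < 2 * n, l.rotate m = l → m = 0) (hlen : l.length = 2 * n)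
    {i j : ℕ} (hi : i < 2 * n) (hj : j < 2 * n) (h : l.rotate i = l.rotate j) : i = j := by
  have h2 : l.rotate (i + (2 * n - j)) = l := by
    rw [← List.rotate_rotate, h, List.rotate_rotate]
    have e : j + (2 * n - j) = 2 * n := by omega
    rw [e, ← hlen, List.rotate_length]
  rw [← List.rotate_mod, hlen] at h2
  have h4 := hself _ (Nat.mod_lt _ (by omega)) h2
  have d := mod2 (a := i) (m := 2 * n - j) (M := 2 * n) (by omega) (by omega)
  omega


/-- For every `n > 3`, the `2n` cyclic rotations of `wₙ` together with the
`2n` cyclic rotations of the reversal of `wₙ` form a set of exactly `4n` distinct words. -/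
theorem wn_rotations_reflections_card (n : ℕ) (hn : 3 < n) :
    ((Finset.range (2 * n)).image (fun i => (wn n).rotate i) ∪
      (Finset.range (2 * n)).image (fun i => (wn n).reverse.rotate i)).card = 4 * n := by
  have hn1 : 1 ≤ n := by omega
  have hL := wn_length n hn1
  have hRL := rev_length n hn1
  have hinj1 : Set.InjOn (fun i => (wn n).rotate i) ↑(Finset.range (2 * n)) := by
    intro i hi j hj h
    simp only [Finset.coe_range, Set.mem_Iio] at hi hj
    exact rot_inj_aux hn (fun m hm => rot_wn_eq hn hm) hL hi hj h
  have hinj2 : Set.InjOn (fun i => (wn n).reverse.rotate i) ↑(Finset.range (2 * n)) := by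
    intro i hi j hj h
    simp only [Finset.coe_range, Set.mem_Iio] at hi hj
    exact rot_inj_aux hn (fun m hm => rot_rev_eq hn hm) hRL hi hj h
  have hdisj : Disjoint ((Finset.range (2 * n)).image (fun i => (wn n).rotate i))
      ((Finset.range (2 * n)).image (fun i => (wn n).reverse.rotate i)) := by
    rw [Finset.disjoint_left]
    rintro v hv hv'
    simp only [Finset.mem_image, Finset.mem_range] at hv hv'
    obtain ⟨i, hi, hiv⟩ := hv
    obtain ⟨j, hj, hjv⟩ := hv'
    have h : (wn n).reverse.rotate (j + (2 * n - i)) = wn n := by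
      rw [← List.rotate_rotate, hjv, ← hiv, List.rotate_rotate]
      have e : i + (2 * n - i) = 2 * n := by omega
      rw [e, ← hL, List.rotate_length]
    rw [← List.rotate_mod, hRL] at h
    exact cross hn (Nat.mod_lt _ (by omega)) h
  rw [Finset.card_union_of_disjoint hdisj, Finset.card_image_of_injOn hinj1,
    Finset.card_image_of_injOn hinj2, Finset.card_range]
  omega
end

section
/- Let n > 3 and let w be a 2-uniform word of length 2n over the alphabet {1, 2, ..., n} whose alternating symbol graph G(w) equals the cycle graph C_n. Then for every letter r ∈ {1, ..., n}, one of the two cyclic arcs between the two occurrences of r in w contains exactly two positions, and the letters at these two positions are exactly the two neighbours of r in C_n (that is, r-1 and r+1, computed cyclically in {1, ..., n}). Equivalently, if i < j are the positions of r, then either j - i = 3 and the letters at the two positions strictly between i and j are the two cyclic neighbours of r, or j - i = 2n - 3 and the letters at the two positions outside [i, j] are the two cyclic neighbours of r. -/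
lemma resid_append (l₁ l₂ : List ℕ) (a b : ℕ) :
    residWord (l₁ ++ l₂) a b = residWord l₁ a b ++ residWord l₂ a b := by
  simp [residWord]

lemma resid_cons_self (c : ℕ) (l : List ℕ) (a b : ℕ) (h : c = a ∨ c = b) :
    residWord (c :: l) a b = c :: residWord l a b := by
  simp [residWord, List.filter_cons, h]

lemma resid_no_b (l : List ℕ) (a b : ℕ) (hb : b ∉ l) :
    residWord l a b = List.replicate (l.count a) a := by
  induction l with
  | nil => simp [residWord]
  | cons c t ih =>
    simp only [List.mem_cons, not_or] at hb
    rcases hb with ⟨hcb, hbt⟩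
    by_cases hca : c = a
    · subst hca
      rw [resid_cons_self c t c b (Or.inl rfl), ih hbt]
      simp [List.count_cons, List.replicate_succ]
    · have : residWord (c :: t) a b = residWord t a b := by
        simp [residWord, List.filter_cons, hca, Ne.symm hcb, fun h : c = b => hcb h.symm]
      rw [this, ih hbt]
      simp [List.count_cons, hca]

lemma not_chain'_aa (l₁ l₂ : List ℕ) (a : ℕ) :
    ¬ List.Chain' (· ≠ ·) (l₁ ++ a :: a :: l₂) := by
  intro h
  have hinf : [a, a] <:+: l₁ ++ a :: a :: l₂ := ⟨l₁, l₂, by simp⟩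
  have := h.infix hinf
  simp [List.isChain_cons_cons] at this

lemma chain_repl_iff (a r : ℕ) (h : a ≠ r) (c₁ c₂ c₃ : ℕ) (hc : c₁ + c₂ + c₃ = 2) :
    List.Chain' (· ≠ ·)
      (List.replicate c₁ a ++ r :: List.replicate c₂ a ++ r :: List.replicate c₃ a) ↔ c₂ = 1 := by
  have h' : r ≠ a := Ne.symm h
  have : (c₁ = 2 ∧ c₂ = 0 ∧ c₃ = 0) ∨ (c₁ = 0 ∧ c₂ = 2 ∧ c₃ = 0) ∨ (c₁ = 0 ∧ c₂ = 0 ∧ c₃ = 2)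
      ∨ (c₁ = 1 ∧ c₂ = 1 ∧ c₃ = 0) ∨ (c₁ = 1 ∧ c₂ = 0 ∧ c₃ = 1) ∨ (c₁ = 0 ∧ c₂ = 1 ∧ c₃ = 1) := by
    omega
  rcases this with ⟨h1,h2,h3⟩|⟨h1,h2,h3⟩|⟨h1,h2,h3⟩|⟨h1,h2,h3⟩|⟨h1,h2,h3⟩|⟨h1,h2,h3⟩ <;>
    subst h1 <;> subst h2 <;> subst h3 <;>
    simp [List.Chain', List.replicate_succ, List.isChain_cons_cons, h, h']

lemma alternates_iff (w₁ w₂ w₃ : List ℕ) (a r : ℕ) (h : a ≠ r)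
    (h1 : r ∉ w₁) (h2 : r ∉ w₂) (h3 : r ∉ w₃)
    (hc : w₁.count a + w₂.count a + w₃.count a = 2) :
    Alternates (w₁ ++ r :: w₂ ++ r :: w₃) a r ↔ w₂.count a = 1 := by
  unfold Alternates
  rw [show w₁ ++ r :: w₂ ++ r :: w₃ = w₁ ++ (r :: w₂) ++ (r :: w₃) by simp,
    resid_append, resid_append,
    resid_cons_self r w₂ a r (Or.inr rfl), resid_cons_self r w₃ a r (Or.inr rfl),
    resid_no_b w₁ a r h1, resid_no_b w₂ a r h2, resid_no_b w₃ a r h3]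
  simpa using chain_repl_iff a r h _ _ _ hc

lemma resid_cons_not (c : ℕ) (l : List ℕ) (a b : ℕ) (ha : c ≠ a) (hb : c ≠ b) :
    residWord (c :: l) a b = residWord l a b := by
  simp [residWord, List.filter_cons, ha, hb]

lemma not_alternates_sep (w₁ w₂ w₃ : List ℕ) (a b r : ℕ) (ha : r ≠ a) (hb : r ≠ b)
    (ha2 : w₂.count a = 2) (hb2 : b ∉ w₂) :
    ¬ Alternates (w₁ ++ r :: w₂ ++ r :: w₃) a b := by
  unfold Alternates
  rw [show w₁ ++ r :: w₂ ++ r :: w₃ = w₁ ++ (r :: w₂) ++ (r :: w₃) by simp,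
    resid_append, resid_append, resid_cons_not r w₂ a b ha hb, resid_cons_not r w₃ a b ha hb,
    resid_no_b w₂ a b hb2, ha2]
  rw [show List.replicate 2 a = [a, a] by rfl]
  rw [show residWord w₁ a b ++ [a, a] ++ residWord w₃ a b
      = residWord w₁ a b ++ a :: a :: residWord w₃ a b by simp]
  exact not_chain'_aa _ _ a


def cyc (n r t : ℕ) : ℕ := (r - 1 + t) % n + 1

lemma cyc_zero (n r : ℕ) (h1 : 1 ≤ r) (h2 : r ≤ n) : cyc n r 0 = r := by
  unfold cyc
  rw [Nat.add_zero, Nat.mod_eq_of_lt (by omega)]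
  omega

lemma cyc_bounds (n r t : ℕ) (hn : 0 < n) : 1 ≤ cyc n r t ∧ cyc n r t ≤ n := by
  unfold cyc
  have := Nat.mod_lt (r - 1 + t) hn
  omega

lemma cyc_succ (n r t : ℕ) (hn : 1 < n) :
    (cyc n r (t+1) = cyc n r t + 1 ∧ cyc n r t < n) ∨
    (cyc n r (t+1) = 1 ∧ cyc n r t = n) := by
  unfold cyc
  set x := (r - 1 + t) % n with hxdef
  have hxlt : x < n := Nat.mod_lt _ (by omega)
  have hstep : (r - 1 + (t+1)) % n = (x + 1) % n := by
    rw [show r - 1 + (t+1) = (r - 1 + t) + 1 by omega, Nat.add_mod,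
      Nat.mod_eq_of_lt hn, ← hxdef]
  rcases Nat.lt_or_ge (x+1) n with h | h
  · left
    rw [hstep, Nat.mod_eq_of_lt h]
    omega
  · right
    have hxn : x + 1 = n := by omega
    rw [hstep, hxn, Nat.mod_self]
    omega

lemma mod_cancel (n u d : ℕ) (hu : u < n) (hd : d < n) (h : (u + d) % n = u) : d = 0 := by
  rcases Nat.lt_or_ge (u + d) n with hlt | hge
  · rw [Nat.mod_eq_of_lt hlt] at h; omega
  · rw [show u + d = (u + d - n) + n by omega, Nat.add_mod_right,
      Nat.mod_eq_of_lt (by omega)] at h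
    omega

lemma cyc_inj_le (n r t s : ℕ) (ht : t < n) (hs : s < n) (hts : t ≤ s)
    (h : cyc n r t = cyc n r s) : t = s := by
  unfold cyc at h
  have hd : s - t < n := by omega
  have e1 : (r - 1 + s) % n = ((r - 1 + t) % n + (s - t)) % n := by
    rw [show r - 1 + s = (r - 1 + t) + (s - t) by omega, Nat.add_mod,
      Nat.mod_eq_of_lt hd]
  have := mod_cancel n ((r - 1 + t) % n) (s - t) (Nat.mod_lt _ (by omega)) hd
    (by rw [← e1]; omega)
  omega

lemma cyc_inj (n r t s : ℕ) (ht : t < n) (hs : s < n) (h : cyc n r t = cyc n r s) : t = s := by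
  rcases Nat.le_total t s with hts | hts
  · exact cyc_inj_le n r t s ht hs hts h
  · exact (cyc_inj_le n r s t hs ht hts h.symm).symm

lemma cyc_surj (n r a : ℕ) (hr1 : 1 ≤ r) (hrn : r ≤ n) (ha1 : 1 ≤ a) (han : a ≤ n) :
    cyc n r ((a + n - r) % n) = a := by
  unfold cyc
  have h1 : (r - 1 + (a + n - r) % n) % n = (r - 1 + (a + n - r)) % n := by
    rw [Nat.add_mod, Nat.mod_mod_of_dvd _ dvd_rfl, ← Nat.add_mod]
  rw [h1, show r - 1 + (a + n - r) = (a - 1) + n by omega, Nat.add_mod_right,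
    Nat.mod_eq_of_lt (by omega)]
  omega

lemma cyc_one (n r : ℕ) (hn : 1 < n) (hr1 : 1 ≤ r) (hrn : r ≤ n) :
    cyc n r 1 = if r = n then 1 else r + 1 := by
  unfold cyc
  split
  · next h => rw [h, show n - 1 + 1 = n by omega, Nat.mod_self]
  · next h => rw [Nat.mod_eq_of_lt (by omega)]; omega

lemma cyc_last (n r : ℕ) (hn : 1 < n) (hr1 : 1 ≤ r) (hrn : r ≤ n) :
    cyc n r (n - 1) = if r = 1 then n else r - 1 := by
  unfold cyc
  split
  · next h => rw [h, show 1 - 1 + (n - 1) = n - 1 by omega, Nat.mod_eq_of_lt (by omega)]; omega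
  · next h =>
    rw [show r - 1 + (n - 1) = (r - 2) + n by omega, Nat.add_mod_right,
      Nat.mod_eq_of_lt (by omega)]
    omega


lemma decomp (w : List ℕ) (i j r : ℕ) (hij : i < j) (hj : j < w.length)
    (hwi : w.getD i 0 = r) (hwj : w.getD j 0 = r) :
    ∃ w₁ w₂ w₃ : List ℕ, w = w₁ ++ r :: w₂ ++ r :: w₃ ∧ w₁.length = i ∧
      w₂.length = j - i - 1 ∧ w₃.length = w.length - j - 1 := by
  have hi : i < w.length := by omega
  have hwi' : w[i] = r := by rw [← List.getD_eq_getElem w 0 hi, hwi]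
  have hwj' : w[j] = r := by rw [← List.getD_eq_getElem w 0 hj, hwj]
  refine ⟨w.take i, (w.drop (i+1)).take (j - i - 1), w.drop (j+1), ?_, ?_, ?_, ?_⟩
  · have h2 : List.drop (i+1) w
        = List.take (j - i - 1) (List.drop (i+1) w) ++ r :: List.drop (j+1) w := by
      conv_lhs => rw [← List.take_append_drop (j - i - 1) (List.drop (i+1) w)]
      congr 1
      rw [List.drop_drop, show i + 1 + (j - i - 1) = j by omega,
        List.drop_eq_getElem_cons hj, hwj']
    conv_lhs => rw [← List.take_append_drop i w, List.drop_eq_getElem_cons hi, hwi', h2]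
    simp
  · simp; omega
  · simp; omega
  · simp; omega

lemma len_count {l : List ℕ} {p q : ℕ} (hpq : p ≠ q) (h : ∀ a ∈ l, a = p ∨ a = q) :
    l.length = l.count p + l.count q := by
  induction l with
  | nil => simp
  | cons c t ih =>
    have hc := h c (by simp)
    have ht := fun a ha => h a (List.mem_cons_of_mem _ ha)
    rcases hc with hc | hc <;> subst hc <;>
      simp [List.count_cons, ih ht, hpq, Ne.symm hpq] <;> omega

/-- Let `n > 3` and let `w` be a 2-uniform word of length `2n` over
`{1, …, n}` with `G(w) = Cₙ`. Then for every letter `r` with occurrences at positions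
`i < j`, one of the two cyclic arcs between the occurrences of `r` contains exactly two
positions, and the letters there are exactly the two cyclic neighbours of `r`: either
`j - i = 3` and the letters strictly between `i` and `j` are `{r-1, r+1}` (cyclically),
or `j - i = 2n - 3` and the letters outside `[i, j]` are `{r-1, r+1}` (cyclically). -/
theorem cycle_word_neighbours_arc (n : ℕ) (hn : 3 < n) (w : List ℕ)
    (hlen : w.length = 2 * n)
    (hmem : ∀ a ∈ w, 1 ≤ a ∧ a ≤ n)
    (hcount : ∀ a, 1 ≤ a → a ≤ n → w.count a = 2)
    (hG : altGraph w = cycleGraph n)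
    (r : ℕ) (hr1 : 1 ≤ r) (hrn : r ≤ n)
    (i j : ℕ) (hi : i < w.length) (hj : j < w.length) (hij : i < j)
    (hwi : w.getD i 0 = r) (hwj : w.getD j 0 = r) :
    (j - i = 3 ∧
      ((Finset.range (2 * n)).filter (fun p => i < p ∧ p < j)).image (fun p => w.getD p 0) =
        ({if r = 1 then n else r - 1, if r = n then 1 else r + 1} : Finset ℕ)) ∨
    (j - i = 2 * n - 3 ∧
      ((Finset.range (2 * n)).filter (fun p => p < i ∨ j < p)).image (fun p => w.getD p 0) =
        ({if r = 1 then n else r - 1, if r = n then 1 else r + 1} : Finset ℕ)) := by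
  obtain ⟨w₁, w₂, w₃, hw, hl1, hl2, hl3⟩ := decomp w i j r hij hj hwi hwj
  have hrw : r ∈ w := List.count_pos_iff.mp (by rw [hcount r hr1 hrn]; omega)
  have hcr0 : List.count r w₁ = 0 ∧ List.count r w₂ = 0 ∧ List.count r w₃ = 0 := by
    have h2 := hcount r hr1 hrn
    rw [hw] at h2
    simp [List.count_append, List.count_cons_self] at h2
    omega
  have hnr1 : r ∉ w₁ := List.count_eq_zero.mp hcr0.1
  have hnr2 : r ∉ w₂ := List.count_eq_zero.mp hcr0.2.1
  have hnr3 : r ∉ w₃ := List.count_eq_zero.mp hcr0.2.2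
  have hsum : ∀ a, a ≠ r → 1 ≤ a → a ≤ n →
      List.count a w₁ + List.count a w₂ + List.count a w₃ = 2 := by
    intro a har ha1 han
    have h2 := hcount a ha1 han
    rw [hw] at h2
    simp [List.count_append, List.count_cons, har, Ne.symm har] at h2
    omega
  have key1 : ∀ a, 1 ≤ a → a ≤ n → a ≠ r →
      ((cycleGraph n).Adj r a ↔ List.count a w₂ = 1) := by
    intro a ha1 han har
    have hmemw : a ∈ w := List.count_pos_iff.mp (by rw [hcount a ha1 han]; omega)
    have e : (cycleGraph n).Adj r a ↔ (r ≠ a ∧ r ∈ w ∧ a ∈ w ∧ Alternates w r a) := by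
      rw [← hG]
      exact Iff.rfl
    have halt : Alternates w r a ↔ List.count a w₂ = 1 := by
      have hcomm : Alternates w r a ↔ Alternates w a r := by
        unfold Alternates; rw [residual_comm]
      rw [hcomm, hw]
      exact alternates_iff w₁ w₂ w₃ a r har hnr1 hnr2 hnr3 (hsum a har ha1 han)
    constructor
    · intro h; exact halt.mp (e.mp h).2.2.2
    · intro h; exact e.mpr ⟨Ne.symm har, hrw, hmemw, halt.mpr h⟩
  have key2 : ∀ a b, a ≠ r → b ≠ r → List.count a w₂ = 2 → List.count b w₂ = 0 →
      ¬ (cycleGraph n).Adj a b := by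
    intro a b har hbr ha2 hb0 hadj
    rw [← hG] at hadj
    exact not_alternates_sep w₁ w₂ w₃ a b r (Ne.symm har) (Ne.symm hbr) ha2
      (List.count_eq_zero.mp hb0) (hw ▸ hadj.2.2.2)
  have hadjc : ∀ t : ℕ, (cycleGraph n).Adj (cyc n r t) (cyc n r (t+1)) := by
    intro t
    obtain ⟨b1, b2⟩ := cyc_bounds n r t (by omega)
    obtain ⟨b1', b2'⟩ := cyc_bounds n r (t+1) (by omega)
    rcases cyc_succ n r t (by omega) with ⟨h1, h2⟩ | ⟨h1, h2⟩
    · exact ⟨by omega, b1, b2, b1', b2', Or.inl h1⟩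
    · exact ⟨by omega, b1, b2, b1', b2', Or.inr (Or.inr (Or.inr ⟨h1, h2⟩))⟩
  have hq : cyc n r 1 = (if r = n then 1 else r + 1) := cyc_one n r (by omega) hr1 hrn
  have hp : cyc n r (n-1) = (if r = 1 then n else r - 1) := cyc_last n r (by omega) hr1 hrn
  have hcyc0 : cyc n r 0 = r := cyc_zero n r hr1 hrn
  have hnbr : ∀ a, (cycleGraph n).Adj r a ↔ (a = cyc n r 1 ∨ a = cyc n r (n-1)) := by
    intro a
    rw [hq, hp]
    constructor
    · rintro ⟨h1, h2, h3, h4, h5, h6⟩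
      split_ifs <;> omega
    · intro h
      have hcon : (r ≠ a ∧ 1 ≤ r ∧ r ≤ n ∧ 1 ≤ a ∧ a ≤ n ∧
          (a = r + 1 ∨ r = a + 1 ∨ (r = 1 ∧ a = n) ∨ (a = 1 ∧ r = n))) := by
        split_ifs at h <;> omega
      exact hcon
  have hner : ∀ t, 1 ≤ t → t ≤ n - 1 → cyc n r t ≠ r := by
    intro t ha hb h
    have := cyc_inj n r t 0 (by omega) (by omega) (by rw [hcyc0]; exact h)
    omega
  have hQb := cyc_bounds n r 1 (by omega)
  have hPb := cyc_bounds n r (n-1) (by omega)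
  have hQr : cyc n r 1 ≠ r := hner 1 (by omega) (by omega)
  have hPr : cyc n r (n-1) ≠ r := hner (n-1) (by omega) (by omega)
  have hPQ : cyc n r (n-1) ≠ cyc n r 1 := by
    intro h
    have := cyc_inj n r (n-1) 1 (by omega) (by omega) h
    omega
  have hmQ : List.count (cyc n r 1) w₂ = 1 :=
    (key1 _ hQb.1 hQb.2 hQr).mp ((hnbr _).mpr (Or.inl rfl))
  have hmP : List.count (cyc n r (n-1)) w₂ = 1 :=
    (key1 _ hPb.1 hPb.2 hPr).mp ((hnbr _).mpr (Or.inr rfl))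
  have hint : ∀ t, 2 ≤ t → t ≤ n - 2 →
      List.count (cyc n r t) w₂ = 0 ∨ List.count (cyc n r t) w₂ = 2 := by
    intro t h2 hn2
    have hb := cyc_bounds n r t (by omega)
    have htr : cyc n r t ≠ r := hner t (by omega) (by omega)
    have hne1 : List.count (cyc n r t) w₂ ≠ 1 := by
      intro h
      have hadj := (key1 _ hb.1 hb.2 htr).mpr h
      rcases (hnbr _).mp hadj with h' | h'
      · have := cyc_inj n r t 1 (by omega) (by omega) h'; omega
      · have := cyc_inj n r t (n-1) (by omega) (by omega) h'; omega
    have hle := hsum _ htr hb.1 hb.2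
    omega
  have hstep : ∀ t, 2 ≤ t → t + 1 ≤ n - 2 →
      List.count (cyc n r t) w₂ = List.count (cyc n r (t+1)) w₂ := by
    intro t h2 h3
    have hadj := hadjc t
    have htr : cyc n r t ≠ r := hner t (by omega) (by omega)
    have htr' : cyc n r (t+1) ≠ r := hner (t+1) (by omega) (by omega)
    rcases hint t h2 (by omega) with h | h <;> rcases hint (t+1) (by omega) h3 with h' | h'
    · rw [h, h']
    · exact absurd ((cycleGraph n).adj_symm hadj) (key2 _ _ htr' htr h' h)
    · exact absurd hadj (key2 _ _ htr htr' h h')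
    · rw [h, h']
  have hconst : ∀ t, 2 ≤ t → t ≤ n - 2 →
      List.count (cyc n r t) w₂ = List.count (cyc n r 2) w₂ := by
    intro t
    induction t with
    | zero => intro h2 _; exact absurd h2 (by omega)
    | succ t ih =>
      intro h2 h3
      rcases Nat.eq_or_lt_of_le h2 with he | hl
      · rw [← he]
      · have h2t : 2 ≤ t := by omega
        rw [← hstep t h2t (by omega)]
        exact ih h2t (by omega)
  have hall : ∀ a, 1 ≤ a → a ≤ n → a ≠ r → a ≠ cyc n r 1 → a ≠ cyc n r (n-1) →
      List.count a w₂ = List.count (cyc n r 2) w₂ := by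
    intro a ha1 han har hq1 hp1
    have hs := cyc_surj n r a hr1 hrn ha1 han
    set t := (a + n - r) % n with htdef
    have htn : t < n := Nat.mod_lt _ (by omega)
    have ht0 : t ≠ 0 := by intro h; rw [h, hcyc0] at hs; exact har hs.symm
    have ht1 : t ≠ 1 := by intro h; rw [h] at hs; exact hq1 hs.symm
    have htn1 : t ≠ n - 1 := by intro h; rw [h] at hs; exact hp1 hs.symm
    rw [← hs]
    exact hconst t (by omega) (by omega)
  rcases hint 2 (by omega) (by omega) with hcase | hcase
  · -- inner arc is short: j - i = 3
    have hmem2 : ∀ a ∈ w₂, a = cyc n r (n-1) ∨ a = cyc n r 1 := by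
      intro a ha
      have haw : a ∈ w := by rw [hw]; simp [ha]
      obtain ⟨ha1, han⟩ := hmem a haw
      have har : a ≠ r := fun h => hnr2 (h ▸ ha)
      by_contra hcon
      push_neg at hcon
      have h2 := hall a ha1 han har hcon.2 hcon.1
      rw [hcase] at h2
      exact (List.count_eq_zero.mp h2) ha
    have hlen2 : w₂.length = 2 := by
      rw [len_count hPQ hmem2, hmP, hmQ]
    have hji : j - i = 3 := by omega
    refine Or.inl ⟨hji, ?_⟩
    have hfilter : (Finset.range (2*n)).filter (fun p => i < p ∧ p < j) = {i+1, i+2} := by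
      ext x
      simp only [Finset.mem_filter, Finset.mem_range, Finset.mem_insert, Finset.mem_singleton]
      omega
    rw [hfilter, Finset.image_insert, Finset.image_singleton, ← hp, ← hq]
    have hgmid : ∀ k, k < w₂.length → w.getD (i + 1 + k) 0 = w₂.getD k 0 := by
      intro k hk
      have hlen1 : (w₁ ++ [r]).length = i + 1 := by simp [hl1]
      rw [hw, show w₁ ++ r :: w₂ ++ r :: w₃ = (w₁ ++ [r]) ++ (w₂ ++ r :: w₃) by simp,
        List.getD_append_right _ _ _ _ (by rw [hlen1]; omega), hlen1,
        show i + 1 + k - (i+1) = k by omega, List.getD_append _ _ _ _ hk]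
    obtain ⟨x, y, hxy⟩ := List.length_eq_two.mp hlen2
    have hvx : w.getD (i+1) 0 = x := by
      have h0 := hgmid 0 (by rw [hlen2]; omega)
      rw [hxy] at h0
      simpa using h0
    have hvy : w.getD (i+2) 0 = y := by
      have h1 := hgmid 1 (by rw [hlen2]; omega)
      rw [hxy, show i + 1 + 1 = i + 2 by omega] at h1
      simpa using h1
    rw [hvx, hvy]
    have hx' : x = cyc n r (n-1) ∨ x = cyc n r 1 := hmem2 x (by rw [hxy]; simp)
    have hy' : y = cyc n r (n-1) ∨ y = cyc n r 1 := hmem2 y (by rw [hxy]; simp)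
    have hmP' : List.count (cyc n r (n-1)) [x, y] = 1 := by rw [← hxy]; exact hmP
    have hmQ' : List.count (cyc n r 1) [x, y] = 1 := by rw [← hxy]; exact hmQ
    rcases hx' with h1 | h1 <;> rcases hy' with h2 | h2 <;> subst h1 <;> subst h2
    · simp [List.count_cons] at hmP'
    · rfl
    · exact Finset.pair_comm _ _
    · simp [List.count_cons] at hmQ'
  · -- inner arc is long: j - i = 2n - 3
    have hmem13 : ∀ a ∈ w₁ ++ w₃, a = cyc n r (n-1) ∨ a = cyc n r 1 := by
      intro a ha
      have haw : a ∈ w := by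
        rw [hw]; rcases List.mem_append.mp ha with h | h <;> simp [h]
      obtain ⟨ha1, han⟩ := hmem a haw
      have har : a ≠ r := by
        intro h
        subst h
        rcases List.mem_append.mp ha with h | h
        · exact hnr1 h
        · exact hnr3 h
      by_contra hcon
      push_neg at hcon
      have h2 := hall a ha1 han har hcon.2 hcon.1
      rw [hcase] at h2
      have hs := hsum a har ha1 han
      have h10 : List.count a w₁ = 0 ∧ List.count a w₃ = 0 := by omega
      rcases List.mem_append.mp ha with h | h
      · exact (List.count_eq_zero.mp h10.1) h
      · exact (List.count_eq_zero.mp h10.2) h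
    have hsP := hsum _ hPr hPb.1 hPb.2
    have hsQ := hsum _ hQr hQb.1 hQb.2
    have hcntP : List.count (cyc n r (n-1)) (w₁ ++ w₃) = 1 := by
      rw [List.count_append]; omega
    have hcntQ : List.count (cyc n r 1) (w₁ ++ w₃) = 1 := by
      rw [List.count_append]; omega
    have hlen13 : (w₁ ++ w₃).length = 2 := by
      rw [len_count hPQ hmem13, hcntP, hcntQ]
    have hlen13' : w₁.length + w₃.length = 2 := by
      rw [← List.length_append]; exact hlen13
    have hji : j - i = 2*n - 3 := by omega
    refine Or.inr ⟨hji, ?_⟩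
    rw [← hp, ← hq]
    have hgpre : ∀ k, k < i → w.getD k 0 = w₁.getD k 0 := by
      intro k hk
      rw [hw, List.append_assoc, List.getD_append w₁ _ 0 k (by rw [hl1]; exact hk)]
    have hgsuf : ∀ k, k < w₃.length → w.getD (j + 1 + k) 0 = w₃.getD k 0 := by
      intro k hk
      have hsplit : w = (w₁ ++ r :: w₂ ++ [r]) ++ w₃ := by rw [hw]; simp
      have hlenpre : (w₁ ++ r :: w₂ ++ [r]).length = j + 1 := by
        simp [hl1, hl2]; omega
      rw [hsplit, List.getD_append_right _ _ _ _ (by rw [hlenpre]; omega), hlenpre,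
        show j + 1 + k - (j+1) = k by omega]
    apply Finset.Subset.antisymm
    · intro x hx
      simp only [Finset.mem_image, Finset.mem_filter, Finset.mem_range] at hx
      obtain ⟨pos, ⟨hp2n, hcases⟩, hval⟩ := hx
      have hx13 : x ∈ w₁ ++ w₃ := by
        rcases hcases with hlt | hgt
        · rw [← hval, hgpre pos hlt]
          refine List.mem_append.mpr (Or.inl ?_)
          rw [List.getD_eq_getElem w₁ 0 (by omega)]
          exact List.getElem_mem _
        · have hk : pos - (j+1) < w₃.length := by omega
          rw [← hval, show pos = j + 1 + (pos - (j+1)) by omega, hgsuf _ hk]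
          refine List.mem_append.mpr (Or.inr ?_)
          rw [List.getD_eq_getElem w₃ 0 hk]
          exact List.getElem_mem _
      rcases hmem13 x hx13 with h | h <;> simp [h]
    · intro x hx
      simp only [Finset.mem_insert, Finset.mem_singleton] at hx
      simp only [Finset.mem_image, Finset.mem_filter, Finset.mem_range]
      have hget : ∀ y, y ∈ w₁ ++ w₃ →
          ∃ pos, (pos < 2*n ∧ (pos < i ∨ j < pos)) ∧ w.getD pos 0 = y := by
        intro y hy
        rcases List.mem_append.mp hy with h1 | h3
        · obtain ⟨k, hk, hkv⟩ := List.getElem_of_mem h1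
          refine ⟨k, ⟨by omega, Or.inl (by omega)⟩, ?_⟩
          rw [hgpre k (by omega), List.getD_eq_getElem _ _ hk, hkv]
        · obtain ⟨k, hk, hkv⟩ := List.getElem_of_mem h3
          refine ⟨j + 1 + k, ⟨by omega, Or.inr (by omega)⟩, ?_⟩
          rw [hgsuf k hk, List.getD_eq_getElem _ _ hk, hkv]
      rcases hx with rfl | rfl
      · exact hget _ (List.count_pos_iff.mp (by rw [hcntP]; omega))
      · exact hget _ (List.count_pos_iff.mp (by rw [hcntQ]; omega))
end
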